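/- Xiao–Massey theorem: an n-variable Boolean function f : F_2^n → F_2 is k-th order correlation immune (1 ≤ k ≤ n), i.e., for every nonempty subset S ⊆ {1,…,n} with |S| ≤ k and every assignment v ∈ F_2^S, the number of x ∈ F_2^n with f(x) = 1 and x agreeing with v on S equals w_h(f)/2^{|S|}, if and only if its Walsh–Hadamard transform satisfies f̂(ω) = ∑_{x ∈ F_2^n} (-1)^{f(x) ⊕ (x·ω)} = 0 for every ω ∈ F_2^n with 1 ≤ w_h(ω) ≤ k. -/
import Mathlib

def sgn (a : ZMod 2) : ℤ := (-1) ^ a.val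

lemma sgn_add (a b : ZMod 2) : sgn (a + b) = sgn a * sgn b := by revert a b; decide

lemma sgn_sum {ι : Type*} (T : Finset ι) (a : ι → ZMod 2) :
    sgn (∑ i ∈ T, a i) = ∏ i ∈ T, sgn (a i) := by
  classical
  induction T using Finset.cons_induction with
  | empty => simp [sgn]
  | cons i T hi ih => rw [Finset.sum_cons, Finset.prod_cons, sgn_add, ih]

lemma sum_neg_flip {α : Type*} (s : Finset α) (φ : α → α)
    (hinv : ∀ x, φ (φ x) = x) (hmem : ∀ x ∈ s, φ x ∈ s)
    (g : α → ℤ) (hg : ∀ x, g (φ x) = - g x) :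
    ∑ x ∈ s, g x = 0 := by
  apply Finset.sum_involution (fun a _ => φ a)
  · intro a _; rw [hg]; ring
  · intro a _ ha heq
    apply ha
    have := hg a
    rw [heq] at this
    omega
  · exact fun a ha => hmem a ha
  · exact fun a _ => hinv a

lemma sum_update_mul (n : ℕ) (x ω : Fin n → ZMod 2) (i0 : Fin n) (s : Finset (Fin n)) (hi : i0 ∈ s) :
    ∑ i ∈ s, (Function.update x i0 (x i0 + 1)) i * ω i = (∑ i ∈ s, x i * ω i) + ω i0 := by
  rw [← Finset.add_sum_erase s _ hi, ← Finset.add_sum_erase s (fun i => x i * ω i) hi]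
  have h2 : ∑ i ∈ s.erase i0, Function.update x i0 (x i0 + 1) i * ω i
      = ∑ i ∈ s.erase i0, x i * ω i := by
    refine Finset.sum_congr rfl fun i hi' => ?_
    rw [Function.update_of_ne (Finset.ne_of_mem_erase hi')]
  rw [h2, Function.update_self]; ring

lemma sum_update (n : ℕ) (x : Fin n → ZMod 2) (i0 : Fin n) (s : Finset (Fin n)) (hi : i0 ∈ s) :
    ∑ i ∈ s, (Function.update x i0 (x i0 + 1)) i = (∑ i ∈ s, x i) + 1 := by
  rw [← Finset.add_sum_erase s _ hi, ← Finset.add_sum_erase s (fun i => x i) hi]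
  have h2 : ∑ i ∈ s.erase i0, Function.update x i0 (x i0 + 1) i
      = ∑ i ∈ s.erase i0, x i := by
    refine Finset.sum_congr rfl fun i hi' => ?_
    rw [Function.update_of_ne (Finset.ne_of_mem_erase hi')]
  rw [h2, Function.update_self]; ring



/-- The Hamming weight of a Boolean function: the number of inputs on which it equals 1. -/
def funWeight (n : ℕ) (f : (Fin n → ZMod 2) → ZMod 2) : ℕ :=
  (Finset.univ.filter (fun x : Fin n → ZMod 2 => f x = 1)).card

/-- The Walsh–Hadamard transform of an `n`-variable Boolean function. -/
def walsh (n : ℕ) (f : (Fin n → ZMod 2) → ZMod 2) (ω : Fin n → ZMod 2) : ℤ :=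
  ∑ x : Fin n → ZMod 2, (-1) ^ ((f x + ∑ i : Fin n, x i * ω i).val)

/-- The Hamming weight of a vector in F₂ⁿ. -/
def vecWeight (n : ℕ) (ω : Fin n → ZMod 2) : ℕ :=
  (Finset.univ.filter (fun i : Fin n => ω i = 1)).card

def Nf (n : ℕ) (f : (Fin n → ZMod 2) → ZMod 2) (ω : Fin n → ZMod 2) : ℤ :=
  ∑ x ∈ Finset.univ.filter (fun x : Fin n → ZMod 2 => f x = 1), sgn (∑ i, x i * ω i)

def indT (n : ℕ) (T : Finset (Fin n)) : Fin n → ZMod 2 := fun i => if i ∈ T then 1 else 0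

lemma char_sum_zero (n : ℕ) (ω : Fin n → ZMod 2) (i0 : Fin n) (h : ω i0 = 1) :
    ∑ x : Fin n → ZMod 2, sgn (∑ i, x i * ω i) = 0 := by
  apply sum_neg_flip _ (fun x => Function.update x i0 (x i0 + 1))
  · intro x
    funext i
    by_cases hii : i = i0
    · subst hii; simp only [Function.update_self]
      have : ∀ a : ZMod 2, a + 1 + 1 = a := by decide
      exact this _
    · rw [Function.update_of_ne hii, Function.update_of_ne hii]
  · intro x _; exact Finset.mem_univ _
  · intro x
    rw [sum_update_mul n x ω i0 Finset.univ (Finset.mem_univ i0), h, sgn_add]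
    have : sgn 1 = -1 := rfl
    rw [this]; ring

lemma walsh_eq (n : ℕ) (f : (Fin n → ZMod 2) → ZMod 2) (ω : Fin n → ZMod 2)
    (i0 : Fin n) (h : ω i0 = 1) : walsh n f ω = -2 * Nf n f ω := by
  have hs : ∀ a b : ZMod 2, ((-1 : ℤ)) ^ ((a + b).val) = sgn a * sgn b := by decide
  have hsgn : ∀ a : ZMod 2, sgn a = 1 - 2 * (if a = 1 then (1:ℤ) else 0) := by decide
  unfold walsh
  calc ∑ x : Fin n → ZMod 2, (-1 : ℤ) ^ ((f x + ∑ i : Fin n, x i * ω i).val)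
      = ∑ x : Fin n → ZMod 2, (1 - 2 * (if f x = 1 then (1:ℤ) else 0)) * sgn (∑ i, x i * ω i) := by
        refine Finset.sum_congr rfl fun x _ => ?_
        rw [hs, hsgn]
    _ = (∑ x : Fin n → ZMod 2, sgn (∑ i, x i * ω i))
        - 2 * ∑ x : Fin n → ZMod 2, (if f x = 1 then sgn (∑ i, x i * ω i) else 0) := by
        rw [Finset.mul_sum, ← Finset.sum_sub_distrib]
        refine Finset.sum_congr rfl fun x _ => ?_
        by_cases hx : f x = 1 <;> simp [hx] <;> ring
    _ = -2 * Nf n f ω := by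
        rw [char_sum_zero n ω i0 h, Nf, ← Finset.sum_filter]
        ring

lemma dot_indT (n : ℕ) (T : Finset (Fin n)) (x : Fin n → ZMod 2) :
    ∑ i, x i * indT n T i = ∑ i ∈ T, x i := by
  simp only [indT, mul_ite, mul_one, mul_zero, Finset.sum_ite_mem, Finset.univ_inter]

lemma vecWeight_indT (n : ℕ) (T : Finset (Fin n)) : vecWeight n (indT n T) = T.card := by
  unfold vecWeight indT
  congr 1
  ext i
  simp only [Finset.mem_filter, Finset.mem_univ, true_and]
  by_cases hi : i ∈ T <;> simp [hi]

lemma keyC (n : ℕ) (f : (Fin n → ZMod 2) → ZMod 2) (S : Finset (Fin n)) (v : Fin n → ZMod 2) :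
    ∑ T ∈ S.powerset, sgn (∑ i ∈ T, v i) * Nf n f (indT n T)
      = ((Finset.univ.filter
            (fun x : Fin n → ZMod 2 => f x = 1 ∧ ∀ i ∈ S, x i = v i)).card : ℤ) * 2 ^ S.card := by
  have step1 : ∀ T ∈ S.powerset, sgn (∑ i ∈ T, v i) * Nf n f (indT n T)
      = ∑ x ∈ Finset.univ.filter (fun x : Fin n → ZMod 2 => f x = 1),
          sgn (∑ i ∈ T, (v i + x i)) := by
    intro T _
    unfold Nf
    rw [Finset.mul_sum]
    refine Finset.sum_congr rfl fun x _ => ?_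
    rw [dot_indT, ← sgn_add, ← Finset.sum_add_distrib]
  rw [Finset.sum_congr rfl step1, Finset.sum_comm]
  have step2 : ∀ x : Fin n → ZMod 2,
      ∑ T ∈ S.powerset, sgn (∑ i ∈ T, (v i + x i))
        = if ∀ i ∈ S, x i = v i then (2:ℤ) ^ S.card else 0 := by
    intro x
    have e1 : ∑ T ∈ S.powerset, sgn (∑ i ∈ T, (v i + x i))
        = ∏ i ∈ S, (sgn (v i + x i) + 1) := by
      rw [Finset.prod_add]
      refine (Finset.sum_congr rfl fun T _ => ?_).symm
      rw [Finset.prod_const_one, mul_one, sgn_sum]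
    rw [e1]
    have hfac : ∀ a b : ZMod 2, sgn (a + b) + 1 = if b = a then (2:ℤ) else 0 := by decide
    by_cases hx : ∀ i ∈ S, x i = v i
    · rw [if_pos hx]
      rw [Finset.prod_congr rfl (fun i hi => by rw [hfac, if_pos (hx i hi)]),
        Finset.prod_const]
    · rw [if_neg hx]
      push_neg at hx
      obtain ⟨i, hi, hne⟩ := hx
      exact Finset.prod_eq_zero hi (by rw [hfac, if_neg hne])
  rw [Finset.sum_congr rfl (fun x _ => step2 x), ← Finset.sum_filter,
    Finset.filter_filter, Finset.sum_const, nsmul_eq_mul]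

lemma flip_invol {n : ℕ} (i0 : Fin n) :
    ∀ x : Fin n → ZMod 2,
      (fun y : Fin n → ZMod 2 => Function.update y i0 (y i0 + 1))
        ((fun y : Fin n → ZMod 2 => Function.update y i0 (y i0 + 1)) x) = x := by
  intro x
  funext i
  by_cases hii : i = i0
  · subst hii
    simp only [Function.update_self]
    have : ∀ a : ZMod 2, a + 1 + 1 = a := by decide
    exact this _
  · simp only [Function.update_of_ne hii]

/-- Xiao–Massey theorem: `f` is `k`-th order correlation immune (for every nonempty set `S`
of at most `k` coordinates and every assignment `v` on `S`, the number of `x` with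
`f x = 1` agreeing with `v` on `S` is `funWeight f / 2 ^ |S|`) if and only if its
Walsh–Hadamard transform vanishes on every `ω` with `1 ≤ w_h(ω) ≤ k`. -/
theorem xiao_massey (n k : ℕ) (hk1 : 1 ≤ k) (hkn : k ≤ n)
    (f : (Fin n → ZMod 2) → ZMod 2) :
    (∀ S : Finset (Fin n), S.Nonempty → S.card ≤ k → ∀ v : Fin n → ZMod 2,
        (Finset.univ.filter
            (fun x : Fin n → ZMod 2 => f x = 1 ∧ ∀ i ∈ S, x i = v i)).card * 2 ^ S.card
          = funWeight n f)
      ↔ (∀ ω : Fin n → ZMod 2, 1 ≤ vecWeight n ω → vecWeight n ω ≤ k →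
          walsh n f ω = 0) := by
  constructor
  · -- CI → Walsh vanishes
    intro h ω hw1 hwk
    set S := Finset.univ.filter (fun i : Fin n => ω i = 1) with hS
    have hScard : S.card = vecWeight n ω := rfl
    have hSne : S.Nonempty := Finset.card_pos.mp (by omega)
    obtain ⟨i0, hi0⟩ := hSne
    have hωi0 : ω i0 = 1 := (Finset.mem_filter.mp hi0).2
    rw [walsh_eq n f ω i0 hωi0]
    suffices hN : Nf n f ω = 0 by rw [hN]; ring
    have hdot : ∀ x : Fin n → ZMod 2, ∑ i, x i * ω i = ∑ i ∈ S, x i := by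
      intro x
      rw [hS, Finset.sum_filter]
      refine Finset.sum_congr rfl fun i _ => ?_
      by_cases hωi : ω i = 1
      · rw [if_pos hωi, hωi, mul_one]
      · have h0 : ω i = 0 := by
          have hz : ∀ a : ZMod 2, a ≠ 1 → a = 0 := by decide
          exact hz _ hωi
        rw [if_neg hωi, h0, mul_zero]
    set π : (Fin n → ZMod 2) → (Fin n → ZMod 2) := fun x i => if i ∈ S then x i else 0 with hπ
    set V := Finset.univ.filter (fun v : Fin n → ZMod 2 => ∀ i, i ∉ S → v i = 0) with hV
    have hfib : Nf n f ω = ∑ v ∈ V,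
        ∑ x ∈ (Finset.univ.filter (fun x : Fin n → ZMod 2 => f x = 1)).filter
            (fun x => π x = v), sgn (∑ i ∈ S, x i) := by
      unfold Nf
      rw [Finset.sum_congr rfl (fun x _ => by rw [hdot x])]
      exact (Finset.sum_fiberwise_of_maps_to
        (fun x _ => Finset.mem_filter.mpr ⟨Finset.mem_univ _, fun i hi => if_neg hi⟩) _).symm
    have hfibeq : ∀ v ∈ V,
        (Finset.univ.filter (fun x : Fin n → ZMod 2 => f x = 1)).filter (fun x => π x = v)
          = Finset.univ.filter (fun x : Fin n → ZMod 2 => f x = 1 ∧ ∀ i ∈ S, x i = v i) := by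
      intro v hv
      have hv' : ∀ i, i ∉ S → v i = 0 := (Finset.mem_filter.mp hv).2
      ext x
      simp only [Finset.mem_filter, Finset.mem_univ, true_and, and_assoc]
      constructor
      · rintro ⟨h1, h2⟩
        refine ⟨h1, fun i hi => ?_⟩
        rw [← congrFun h2 i, hπ]
        exact (if_pos hi).symm
      · rintro ⟨h1, h2⟩
        refine ⟨h1, funext fun i => ?_⟩
        by_cases hi : i ∈ S
        · rw [hπ]; simpa [if_pos hi] using h2 i hi
        · rw [hπ]; simp only [if_neg hi]; exact (hv' i hi).symm
    have hinner : ∀ v ∈ V,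
        ∑ x ∈ (Finset.univ.filter (fun x : Fin n → ZMod 2 => f x = 1)).filter
            (fun x => π x = v), sgn (∑ i ∈ S, x i)
          = ((Finset.univ.filter
              (fun x : Fin n → ZMod 2 => f x = 1 ∧ ∀ i ∈ S, x i = v i)).card : ℤ)
              * sgn (∑ i ∈ S, v i) := by
      intro v hv
      rw [hfibeq v hv]
      have : ∀ x ∈ Finset.univ.filter
          (fun x : Fin n → ZMod 2 => f x = 1 ∧ ∀ i ∈ S, x i = v i),
          sgn (∑ i ∈ S, x i) = sgn (∑ i ∈ S, v i) := by
        intro x hx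
        have h2 := (Finset.mem_filter.mp hx).2.2
        rw [Finset.sum_congr rfl h2]
      rw [Finset.sum_congr rfl this, Finset.sum_const, nsmul_eq_mul]
    rw [hfib, Finset.sum_congr rfl hinner]
    -- now use the hypothesis to replace each card
    have hSk : S.card ≤ k := by rw [hScard]; exact hwk
    have hSne' : S.Nonempty := ⟨i0, hi0⟩
    have hcount : ∀ v : Fin n → ZMod 2,
        ((Finset.univ.filter
            (fun x : Fin n → ZMod 2 => f x = 1 ∧ ∀ i ∈ S, x i = v i)).card : ℤ) * 2 ^ S.card
          = (funWeight n f : ℤ) := by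
      intro v
      exact_mod_cast congrArg (Nat.cast : ℕ → ℤ) (h S hSne' hSk v)
    have hVsum : ∑ v ∈ V, sgn (∑ i ∈ S, v i) = 0 := by
      apply sum_neg_flip V (fun y => Function.update y i0 (y i0 + 1)) (flip_invol i0)
      · intro v hv
        have hv' : ∀ i, i ∉ S → v i = 0 := (Finset.mem_filter.mp hv).2
        refine Finset.mem_filter.mpr ⟨Finset.mem_univ _, fun i hi => ?_⟩
        have hne : i ≠ i0 := fun hc => hi (hc ▸ hi0)
        rw [Function.update_of_ne hne]
        exact hv' i hi
      · intro v
        rw [sum_update n v i0 S hi0, sgn_add]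
        have : sgn 1 = -1 := rfl
        rw [this]; ring
    have hmul : (2 : ℤ) ^ S.card * ∑ v ∈ V,
        ((Finset.univ.filter
            (fun x : Fin n → ZMod 2 => f x = 1 ∧ ∀ i ∈ S, x i = v i)).card : ℤ)
            * sgn (∑ i ∈ S, v i) = 0 := by
      rw [Finset.mul_sum]
      calc ∑ v ∈ V, (2:ℤ) ^ S.card *
            (((Finset.univ.filter
              (fun x : Fin n → ZMod 2 => f x = 1 ∧ ∀ i ∈ S, x i = v i)).card : ℤ)
              * sgn (∑ i ∈ S, v i))
          = ∑ v ∈ V, (funWeight n f : ℤ) * sgn (∑ i ∈ S, v i) := by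
            refine Finset.sum_congr rfl fun v _ => ?_
            rw [← hcount v]; ring
        _ = (funWeight n f : ℤ) * ∑ v ∈ V, sgn (∑ i ∈ S, v i) := by rw [Finset.mul_sum]
        _ = 0 := by rw [hVsum, mul_zero]
    have h2 : (2 : ℤ) ^ S.card ≠ 0 := pow_ne_zero _ two_ne_zero
    exact (mul_eq_zero.mp hmul).resolve_left h2
  · -- Walsh vanishes → CI
    intro h S hSne hSk v
    have key := keyC n f S v
    have hz : ∀ T ∈ S.powerset, T ≠ ∅ → sgn (∑ i ∈ T, v i) * Nf n f (indT n T) = 0 := by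
      intro T hT hTne
      have hTne' : T.Nonempty := Finset.nonempty_of_ne_empty hTne
      have hT1 : 1 ≤ T.card := Finset.card_pos.mpr hTne'
      have hTle : T.card ≤ k :=
        le_trans (Finset.card_le_card (Finset.mem_powerset.mp hT)) hSk
      obtain ⟨i0, hi0⟩ := hTne'
      have hω : indT n T i0 = 1 := if_pos hi0
      have hw := h (indT n T) (by rw [vecWeight_indT]; exact hT1) (by rw [vecWeight_indT]; exact hTle)
      rw [walsh_eq n f _ i0 hω] at hw
      have hN0 : Nf n f (indT n T) = 0 := by linarith
      rw [hN0, mul_zero]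
    rw [Finset.sum_eq_single_of_mem ∅ (Finset.empty_mem_powerset S) hz] at key
    have hNe : Nf n f (indT n ∅) = (funWeight n f : ℤ) := by
      unfold Nf funWeight
      have hone : ∀ x : Fin n → ZMod 2, sgn (∑ i, x i * indT n ∅ i) = 1 := by
        intro x
        rw [dot_indT]
        rfl
      rw [Finset.sum_congr rfl (fun x _ => hone x), Finset.sum_const, nsmul_eq_mul, mul_one]
    rw [hNe, Finset.sum_empty] at key
    have hsgn0 : sgn 0 = 1 := rfl
    rw [hsgn0, one_mul] at key
    exact_mod_cast key.symm
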